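/- arXiv:1804.10482 — 5 statements merged into one kernel-verified Lean document; each statement's English description precedes it below -/
import Mathlib

section
/- Let H ∈ (1/2,1), T > 0, and let σ : [0,T] → ℝ be continuous. Define ‖σ‖_t² = H(2H−1) ∫_0^t ∫_0^t |u−v|^{2H−2} σ(u) σ(v) du dv and σ̂(t) = H(2H−1) ∫_0^t (t−v)^{2H−2} σ(v) dv. Then for every t ∈ (0,T), the function t ↦ ‖σ‖_t² is differentiable at t with derivative d/dt(‖σ‖_t²) = 2 σ̂(t) σ(t). -/
/-!
The kernel `φ(x) = |x| ^ (2H - 2)` is even and locally integrable (as `2H - 2 > -1`), so on the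
square `[0, r]²` the integrand `φ(u - v) σ(u) σ(v)` is integrable and symmetric, and the double
integral is twice the integral over the triangle `v ≤ u`, namely `2 ∫_0^r σ(u) ∫_0^u φ(u - v) σ(v) dv du`.
The inner integral is continuous in `u`: after substituting `w = u - v` it is a primitive of an
integrand that depends continuously on `u` and is dominated by `sup |σ| · |φ|`. The fundamental
theorem of calculus then gives the derivative `2 σ(t) ∫_0^t φ(t - v) σ(v) dv`. Extending `σ`
continuously from `[0, T]` to `ℝ` changes none of the integrals over `[0, r] ⊆ [0, T]`.
-/

open MeasureTheory intervalIntegral Set Real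

theorem intervalIntegrable_abs_rpow {α : ℝ} (hα : -1 < α) (a b : ℝ) :
    IntervalIntegrable (fun x : ℝ => |x| ^ α) volume a b := by
  have of_nonneg : ∀ c, 0 ≤ c → IntervalIntegrable (fun x : ℝ => |x| ^ α) volume 0 c :=
    fun c hc => (intervalIntegrable_rpow' hα).congr fun x hx => by
      rw [uIoc_of_le hc] at hx
      simp only [abs_of_pos hx.1]
  have from_zero : ∀ c, IntervalIntegrable (fun x : ℝ => |x| ^ α) volume 0 c := by
    intro c
    rcases le_total 0 c with hc | hc
    · exact of_nonneg c hc
    · rw [IntervalIntegrable.iff_comp_neg]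
      simpa only [abs_neg, neg_zero] using of_nonneg (-c) (by linarith)
  exact (from_zero a).symm.trans (from_zero b)

theorem ae_prod_fst_ne_snd {μ ν : Measure ℝ} [SFinite ν] [NullSingletonClass ν] :
    ∀ᵐ p ∂μ.prod ν, p.1 ≠ p.2 :=
  (Measure.ae_prod_iff_ae_ae (measurableSet_eq_fun measurable_fst measurable_snd).compl).2
    (ae_of_all _ fun u => (ν.ae_ne u).mono fun _ hv => hv.symm)

section Square

variable {a b : ℝ}

theorem integral_prod_indicator_snd_le_fst {f : ℝ → ℝ → ℝ} (hab : a ≤ b)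
    (hf : Integrable (Function.uncurry f)
      ((volume.restrict (Ioc a b)).prod (volume.restrict (Ioc a b)))) :
    ∫ p, {p : ℝ × ℝ | p.2 ≤ p.1}.indicator (Function.uncurry f) p
        ∂(volume.restrict (Ioc a b)).prod (volume.restrict (Ioc a b))
      = ∫ u in a..b, ∫ v in a..u, f u v := by
  rw [integral_prod _ (hf.indicator (measurableSet_le measurable_snd measurable_fst)),
    integral_of_le hab]
  refine setIntegral_congr_fun measurableSet_Ioc fun u hu => ?_
  have hsection : (fun v => {p : ℝ × ℝ | p.2 ≤ p.1}.indicator (Function.uncurry f) (u, v))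
      = (Iic u).indicator (f u) := by
    ext v
    by_cases hvu : v ≤ u
    · rw [indicator_of_mem (show (u, v) ∈ {p : ℝ × ℝ | p.2 ≤ p.1} from hvu),
        indicator_of_mem (show v ∈ Iic u from hvu)]
      rfl
    · rw [indicator_of_notMem (show (u, v) ∉ {p : ℝ × ℝ | p.2 ≤ p.1} from hvu),
        indicator_of_notMem (show v ∉ Iic u from hvu)]
  rw [hsection, MeasureTheory.integral_indicator measurableSet_Iic,
    Measure.restrict_restrict measurableSet_Iic, Iic_inter_Ioc_of_le hu.2, integral_of_le hu.1.le]

/-- Swapping the coordinates maps the region `u < v` onto `v < u`, which agrees with the triangle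
`v ≤ u` off the null diagonal. -/
theorem integral_integral_eq_two_mul_integral_integral_of_symm {f : ℝ → ℝ → ℝ} (hab : a ≤ b)
    (hsymm : ∀ u v, f u v = f v u)
    (hf : Integrable (Function.uncurry f)
      ((volume.restrict (Ioc a b)).prod (volume.restrict (Ioc a b)))) :
    ∫ u in a..b, ∫ v in a..b, f u v = 2 * ∫ u in a..b, ∫ v in a..u, f u v := by
  set μ := volume.restrict (Ioc a b)
  set F := Function.uncurry f
  set L : Set (ℝ × ℝ) := {p | p.2 ≤ p.1}
  have hL : MeasurableSet L := measurableSet_le measurable_snd measurable_fst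
  have hsquare : ∫ u in a..b, ∫ v in a..b, f u v = ∫ p, F p ∂μ.prod μ := by
    rw [integral_prod F hf, integral_of_le hab]
    exact setIntegral_congr_fun measurableSet_Ioc fun u _ => integral_of_le hab
  have hupper : ∫ p, Lᶜ.indicator F p ∂μ.prod μ = ∫ p, L.indicator F p ∂μ.prod μ := by
    rw [← Measure.measurePreserving_swap.integral_comp' (f := MeasurableEquiv.prodComm)]
    refine integral_congr_ae (ae_prod_fst_ne_snd.mono fun p hp => ?_)
    obtain ⟨u, v⟩ := p
    change Lᶜ.indicator F (v, u) = L.indicator F (u, v)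
    by_cases hvu : v ≤ u
    · rw [indicator_of_mem (show (v, u) ∈ Lᶜ from fun huv => hp (le_antisymm huv hvu)),
        indicator_of_mem (show (u, v) ∈ L from hvu)]
      exact hsymm v u
    · rw [indicator_of_notMem (show (v, u) ∉ Lᶜ from not_not.2 (le_of_not_ge hvu)),
        indicator_of_notMem (show (u, v) ∉ L from hvu)]
  rw [hsquare, ← Set.indicator_self_add_compl L F, integral_add' (hf.indicator hL)
    (hf.indicator hL.compl), hupper, integral_prod_indicator_snd_le_fst hab hf, two_mul]

theorem integrable_prod_kernel_sub_mul_mul {φ σ : ℝ → ℝ} {M : ℝ} (hab : a ≤ b)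
    (hφ : IntervalIntegrable φ volume (a - b) (b - a)) (hσ : Measurable σ)
    (hM : ∀ x, |σ x| ≤ M) :
    Integrable (fun p : ℝ × ℝ => φ (p.1 - p.2) * σ p.1 * σ p.2)
      ((volume.restrict (Ioc a b)).prod (volume.restrict (Ioc a b))) := by
  have hσ_int : Integrable ((Ioc a b).indicator σ) :=
    (Measure.integrableOn_of_bounded measure_Ioc_lt_top.ne hσ.aestronglyMeasurable
      (M := M) (ae_of_all _ hM)).integrable_indicator measurableSet_Ioc
  have hφ_int : Integrable ((Ioc (a - b) (b - a)).indicator φ) :=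
    ((intervalIntegrable_iff_integrableOn_Ioc_of_le (by linarith)).1 hφ).integrable_indicator
      measurableSet_Ioc
  have hconv := ((hσ_int.convolution_integrand (ContinuousLinearMap.mul ℝ ℝ) hφ_int).restrict
    (s := Ioc a b ×ˢ Ioc a b)).bdd_mul (c := M) (f := fun p => σ p.1)
    (hσ.comp measurable_fst).aestronglyMeasurable (ae_of_all _ fun p => hM p.1)
  rw [Measure.prod_restrict]
  refine hconv.congr ((ae_restrict_mem (measurableSet_Ioc.prod measurableSet_Ioc)).mono ?_)
  rintro ⟨u, v⟩ ⟨hu, hv : v ∈ Ioc a b⟩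
  change u ∈ Ioc a b at hu
  have huv : u - v ∈ Ioc (a - b) (b - a) :=
    ⟨by linarith [hu.1, hv.2], by linarith [hu.2, hv.1]⟩
  simp only [ContinuousLinearMap.mul_apply', indicator_of_mem hv, indicator_of_mem huv]
  ring

end Square

theorem continuous_intervalIntegral_kernel_sub_mul {φ σ : ℝ → ℝ} {M : ℝ}
    (hφ : ∀ a b, IntervalIntegrable φ volume a b) (hσ : Continuous σ) (hM : ∀ x, |σ x| ≤ M) :
    Continuous fun u => ∫ v in (0 : ℝ)..u, φ (u - v) * σ v := by
  have hsubst : (fun u => ∫ v in (0 : ℝ)..u, φ (u - v) * σ v)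
      = fun u => ∫ w in (0 : ℝ)..u, φ w * σ (u - w) := by
    ext u
    simpa using integral_comp_sub_left (a := 0) (b := u) (fun w => φ w * σ (u - w)) u
  rw [hsubst, continuous_iff_continuousAt]
  intro u₀
  have hjoint := continuousAt_parametric_primitive_of_dominated (μ := volume) (a₀ := 0)
    (F := fun u w => φ w * σ (u - w)) (x₀ := u₀) (b₀ := u₀)
    (fun w => M * |φ w|) (min 0 u₀ - 1) (max 0 u₀ + 1)
    (fun u => (hφ _ _).1.aestronglyMeasurable.mul
      (by fun_prop : Continuous fun w => σ (u - w)).aestronglyMeasurable)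
    (Filter.Eventually.of_forall fun u => ae_of_all _ fun w => by
      rw [norm_mul, mul_comm, Real.norm_eq_abs, Real.norm_eq_abs]
      exact mul_le_mul_of_nonneg_right (hM _) (abs_nonneg _))
    ((hφ _ _).abs.const_mul M)
    (ae_of_all _ fun w => by fun_prop)
    ⟨by linarith [min_le_left 0 u₀], by linarith [le_max_left 0 u₀]⟩
    ⟨by linarith [min_le_right 0 u₀], by linarith [le_max_right 0 u₀]⟩ Real.volume_singleton
  exact hjoint.comp (f := fun u => (u, u)) (by fun_prop)

theorem hasDerivAt_integral_integral_kernel {φ σ : ℝ → ℝ} {M t : ℝ}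
    (hφ : ∀ a b, IntervalIntegrable φ volume a b) (hφ_even : φ.Even) (hσ : Continuous σ)
    (hM : ∀ x, |σ x| ≤ M) (ht : 0 < t) :
    HasDerivAt (fun r => ∫ u in (0 : ℝ)..r, ∫ v in (0 : ℝ)..r, φ (u - v) * σ u * σ v)
      (2 * (∫ v in (0 : ℝ)..t, φ (t - v) * σ v) * σ t) t := by
  set G : ℝ → ℝ := fun u => σ u * ∫ v in (0 : ℝ)..u, φ (u - v) * σ v
  have hG : Continuous G := hσ.mul (continuous_intervalIntegral_kernel_sub_mul hφ hσ hM)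
  have htriangle : ∀ r, 0 ≤ r → ∫ u in (0 : ℝ)..r, ∫ v in (0 : ℝ)..r, φ (u - v) * σ u * σ v
      = 2 * ∫ u in (0 : ℝ)..r, G u := by
    intro r hr
    rw [integral_integral_eq_two_mul_integral_integral_of_symm
      (f := fun u v => φ (u - v) * σ u * σ v) hr (fun u v => by rw [← neg_sub, hφ_even]; ring)
      (integrable_prod_kernel_sub_mul_mul hr (hφ _ _) hσ.measurable hM)]
    congr 1
    refine integral_congr fun u _ => ?_
    simp only [G, ← intervalIntegral.integral_const_mul]
    exact integral_congr fun v _ => by ring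
  have hderiv := ((hG.integral_hasStrictDerivAt 0 t).hasDerivAt.const_mul 2).congr_of_eventuallyEq
    (Filter.eventually_of_mem (Ioi_mem_nhds ht) fun r hr => htriangle r (le_of_lt hr))
  exact hderiv.congr_deriv (by simp only [G]; ring)

theorem fbm_normSq_hasDerivAt_general
    (H T : ℝ) (hH : 1 / 2 < H) (hT : 0 < T)
    (σ : ℝ → ℝ) (hσ : ContinuousOn σ (Set.Icc 0 T)) :
    ∀ t ∈ Set.Ioo (0 : ℝ) T,
      HasDerivAt
        (fun r : ℝ => H * (2 * H - 1) *
          ∫ u in (0 : ℝ)..r, ∫ v in (0 : ℝ)..r, |u - v| ^ (2 * H - 2) * σ u * σ v)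
        (2 * (H * (2 * H - 1) * ∫ v in (0 : ℝ)..t, (t - v) ^ (2 * H - 2) * σ v) * σ t)
        t := by
  intro t ht
  set σ' : ℝ → ℝ := fun x => σ (projIcc 0 T hT.le x)
  have hσ' : Continuous σ' :=
    hσ.comp_continuous (continuous_subtype_val.comp continuous_projIcc) fun x => (projIcc 0 T _ x).2
  obtain ⟨M, hM⟩ := isCompact_Icc.exists_bound_of_continuousOn hσ
  have hσ'_eq : ∀ r ∈ Ioo 0 T, ∀ v ∈ uIcc 0 r, σ' v = σ v := fun r hr v hv => by
    rw [uIcc_of_le hr.1.le] at hv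
    simp only [σ', projIcc_of_mem _ ⟨hv.1, hv.2.trans hr.2.le⟩]
  have hkernel := (hasDerivAt_integral_integral_kernel (φ := fun x => |x| ^ (2 * H - 2))
    (intervalIntegrable_abs_rpow (by linarith)) (fun x => by simp only [abs_neg]) hσ'
    (fun x => hM _ (projIcc 0 T hT.le x).2) ht.1).const_mul (H * (2 * H - 1))
  refine (hkernel.congr_of_eventuallyEq (Filter.eventually_of_mem (Ioo_mem_nhds ht.1 ht.2)
    fun r hr => ?_)).congr_deriv ?_
  · congr 1
    exact integral_congr fun u hu => integral_congr fun v hv => by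
      rw [hσ'_eq r hr u hu, hσ'_eq r hr v hv]
  · have hv_le : ∀ v ∈ uIcc 0 t, v ≤ t := fun v hv => (uIcc_of_le ht.1.le ▸ hv).2
    rw [hσ'_eq t ht t right_mem_uIcc, integral_congr fun v hv => by
      rw [hσ'_eq t ht v hv, abs_of_nonneg (sub_nonneg.2 (hv_le v hv))]]
    ring

/-- For `H ∈ (1/2,1)` and continuous `σ` on `[0,T]`, the function
`t ↦ ‖σ‖_t² = H(2H−1) ∫_0^t ∫_0^t |u−v|^{2H−2} σ(u) σ(v) du dv` is differentiable
on `(0,T)` with derivative `2 σ̂(t) σ(t)`, where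
`σ̂(t) = H(2H−1) ∫_0^t (t−v)^{2H−2} σ(v) dv`. -/
theorem fbm_normSq_hasDerivAt
    (H T : ℝ) (hH : 1 / 2 < H) (hH1 : H < 1) (hT : 0 < T)
    (σ : ℝ → ℝ) (hσ : ContinuousOn σ (Set.Icc 0 T)) :
    ∀ t ∈ Set.Ioo (0 : ℝ) T,
      HasDerivAt
        (fun r : ℝ => H * (2 * H - 1) *
          ∫ u in (0 : ℝ)..r, ∫ v in (0 : ℝ)..r, |u - v| ^ (2 * H - 2) * σ u * σ v)
        (2 * (H * (2 * H - 1) * ∫ v in (0 : ℝ)..t, (t - v) ^ (2 * H - 2) * σ v) * σ t)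
        t :=
  fbm_normSq_hasDerivAt_general H T hH hT σ hσ
end

section
/- Let T > 0, K ≥ 0, L ≥ 0, and let δ : [0,T] → [0,∞) be measurable with s + δ(s) ≤ T + K for all s ∈ [0,T] and such that for every nonnegative integrable function m on [0,T+K] and every t ∈ [0,T] one has ∫_t^T m(s+δ(s)) ds ≤ L ∫_t^{T+K} m(s) ds. Then for every nondecreasing function w : [0,T+K] → [0,∞) and every nonnegative measurable z : [0,T+K] → [0,∞) such that w·z is integrable on [0,T+K], and every t ∈ [0,T], one has ∫_t^T w(s) z(s+δ(s)) ds ≤ L ∫_t^{T+K} w(s) z(s) ds. -/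
/-!
Since `δ ≥ 0` and `w` is nondecreasing, `w(s) z(s + δ(s)) ≤ (w z)(s + δ(s))`, so the claim is
the shift inequality applied to `m = w z`. Two technical points: `w` is only monotone on
`[0, T + K]`, so it is first extended by clamping to a globally monotone (hence measurable)
function; and the shift inequality says nothing about `m(· + δ)` when that function is not
integrable, so it is applied to the bounded truncations `min m n`, and the bound is passed to the
limit `n → ∞` by dominated convergence.
-/

open MeasureTheory intervalIntegral Filter Set Topology

theorem integral_le_of_forall_integral_min_natCast_le {α : Type*} [MeasurableSpace α]
    {μ : Measure α} {f : α → ℝ} {C : ℝ} (hf : AEStronglyMeasurable f μ) (hf0 : 0 ≤ᵐ[μ] f)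
    (h : ∀ n : ℕ, ∫ x, min (f x) n ∂μ ≤ C) : ∫ x, f x ∂μ ≤ C := by
  by_cases hint : Integrable f μ
  · have hlim : Tendsto (fun n : ℕ => ∫ x, min (f x) n ∂μ) atTop (𝓝 (∫ x, f x ∂μ)) := by
      refine tendsto_integral_of_dominated_convergence f
        (fun n => hf.inf aestronglyMeasurable_const) hint (fun n => ?_) ?_
      · filter_upwards [hf0] with x hx
        rw [Real.norm_of_nonneg (le_min hx n.cast_nonneg)]
        exact min_le_left _ _
      · filter_upwards with x
        exact tendsto_const_nhds.congr' <|
          (tendsto_natCast_atTop_atTop.eventually_ge_atTop (f x)).mono fun n hn =>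
            (min_eq_left hn).symm
    exact le_of_tendsto' hlim h
  · have hmin0 : ∫ x, min (f x) ((0 : ℕ) : ℝ) ∂μ = 0 := by
      refine integral_eq_zero_of_ae ?_
      filter_upwards [hf0] with x hx
      simpa using hx
    calc ∫ x, f x ∂μ = ∫ x, min (f x) ((0 : ℕ) : ℝ) ∂μ := by rw [integral_undef hint, hmin0]
      _ ≤ C := h 0

theorem MonotoneOn.exists_monotone_nonneg_eqOn_Icc {α β : Type*} [LinearOrder α] [Preorder β]
    [Zero β] {a b : α} (hab : a ≤ b) {w : α → β} (hw : MonotoneOn w (Icc a b))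
    (hw0 : ∀ x ∈ Icc a b, 0 ≤ w x) :
    ∃ W : α → β, Monotone W ∧ (∀ x, 0 ≤ W x) ∧ EqOn W w (Icc a b) :=
  ⟨IccExtend hab fun x : Icc a b => w x, (monotoneOn_iff_monotone.1 hw).IccExtend hab,
    fun _ => hw0 _ (Subtype.prop _), fun _ hx => IccExtend_of_mem hab _ hx⟩

theorem MeasureTheory.IntegrableOn.of_nonneg_of_bddAbove {α : Type*} [MeasurableSpace α]
    {μ : Measure α} {s : Set α} (hs : μ s < ⊤) {g : α → ℝ}
    (hg : AEStronglyMeasurable g (μ.restrict s))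
    (hg0 : ∀ x, 0 ≤ g x) (hgb : BddAbove (range g)) : IntegrableOn g s μ := by
  obtain ⟨C, hC⟩ := hgb
  exact .of_bound hs hg C <| ae_of_all _ fun x => by
    rw [Real.norm_of_nonneg (hg0 x)]
    exact hC (mem_range_self x)

theorem bddAbove_range_min_natCast {α : Type*} (g : α → ℝ) (n : ℕ) :
    BddAbove (range fun x => min (g x) n) :=
  ⟨n, forall_mem_range.2 fun _ => min_le_right _ _⟩

theorem intervalIntegral_mul_comp_add_le_of_monotone {δ W z : ℝ → ℝ} {a b c L : ℝ}
    (hab : a ≤ b) (hac : a ≤ c) (hL : 0 ≤ L) (hδ : Measurable δ) (hδ0 : ∀ s ∈ Ioc a b, 0 ≤ δ s)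
    (hshift : ∀ m : ℝ → ℝ, Measurable m → (∀ s, 0 ≤ m s) → BddAbove (range m) →
      (∫ s in a..b, m (s + δ s)) ≤ L * ∫ s in a..c, m s)
    (hW : Monotone W) (hW0 : ∀ s, 0 ≤ W s) (hz : Measurable z) (hz0 : ∀ s, 0 ≤ z s)
    (hWz : IntervalIntegrable (fun s => W s * z s) volume a c) :
    (∫ s in a..b, W s * z (s + δ s)) ≤ L * ∫ s in a..c, W s * z s := by
  set m : ℝ → ℝ := fun s => W s * z s
  have hm : Measurable m := hW.measurable.mul hz
  have hm0 : ∀ s, 0 ≤ m s := fun s => mul_nonneg (hW0 s) (hz0 s)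
  have hweight : ∀ s ∈ Ioc a b, W s * z (s + δ s) ≤ m (s + δ s) := fun s hs =>
    mul_le_mul_of_nonneg_right (hW (le_add_of_nonneg_right (hδ0 s hs))) (hz0 _)
  rw [integral_of_le hab, integral_of_le hac]
  refine integral_le_of_forall_integral_min_natCast_le
    (hW.measurable.mul (hz.comp (measurable_id.add hδ))).aestronglyMeasurable
    (ae_of_all _ fun s => mul_nonneg (hW0 s) (hz0 _)) fun n => ?_
  have hshift_n := hshift (fun s => min (m s) n) (hm.min measurable_const)
    (fun s => le_min (hm0 s) n.cast_nonneg) (bddAbove_range_min_natCast m n)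
  rw [integral_of_le hab, integral_of_le hac] at hshift_n
  calc ∫ s in Ioc a b, min (W s * z (s + δ s)) n
      ≤ ∫ s in Ioc a b, min (m (s + δ s)) n :=
        integral_mono_of_nonneg
          (ae_of_all _ fun s => le_min (mul_nonneg (hW0 s) (hz0 _)) n.cast_nonneg)
          (IntegrableOn.of_nonneg_of_bddAbove measure_Ioc_lt_top
            ((hm.comp (measurable_id.add hδ)).min measurable_const).aestronglyMeasurable
            (fun s => le_min (hm0 _) n.cast_nonneg) (bddAbove_range_min_natCast _ n))
          ((ae_restrict_mem measurableSet_Ioc).mono fun s hs =>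
            min_le_min_right _ (hweight s hs))
    _ ≤ L * ∫ s in Ioc a c, min (m s) n := hshift_n
    _ ≤ L * ∫ s in Ioc a c, m s :=
        mul_le_mul_of_nonneg_left (integral_mono_of_nonneg
          (ae_of_all _ fun s => le_min (hm0 s) n.cast_nonneg) hWz.1
          (ae_of_all _ fun s => min_le_left _ _)) hL

theorem shift_ineq_monotone_weight_general
    (T K L : ℝ) (hK : 0 ≤ K) (hL : 0 ≤ L)
    (δ : ℝ → ℝ) (hδmeas : Measurable δ)
    (hδnn : ∀ s ∈ Set.Icc (0 : ℝ) T, 0 ≤ δ s)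
    (hshift : ∀ m : ℝ → ℝ, (∀ s, 0 ≤ m s) → IntegrableOn m (Set.Icc 0 (T + K)) →
        ∀ t ∈ Set.Icc (0 : ℝ) T,
          (∫ s in t..T, m (s + δ s)) ≤ L * ∫ s in t..(T + K), m s)
    (w : ℝ → ℝ) (hw : MonotoneOn w (Set.Icc 0 (T + K)))
    (hwnn : ∀ s ∈ Set.Icc (0 : ℝ) (T + K), 0 ≤ w s)
    (z : ℝ → ℝ) (hz : Measurable z) (hznn : ∀ s, 0 ≤ z s)
    (hwz : IntegrableOn (fun s => w s * z s) (Set.Icc 0 (T + K))) :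
    ∀ t ∈ Set.Icc (0 : ℝ) T,
      (∫ s in t..T, w s * z (s + δ s)) ≤ L * ∫ s in t..(T + K), w s * z s := by
  rintro t ⟨ht0, htT⟩
  have htTK : t ≤ T + K := by linarith
  obtain ⟨W, hWmono, hW0, hWw⟩ := hw.exists_monotone_nonneg_eqOn_Icc (by linarith) hwnn
  have hsub : ∀ {b}, t ≤ b → b ≤ T + K → uIcc t b ⊆ Icc 0 (T + K) := fun htb hb s hs => by
    rw [uIcc_of_le htb] at hs
    exact ⟨ht0.trans hs.1, hs.2.trans hb⟩
  have hlhs : ∫ s in t..T, w s * z (s + δ s) = ∫ s in t..T, W s * z (s + δ s) :=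
    integral_congr fun s hs => by simp only [hWw (hsub htT (by linarith) hs)]
  have hrhs : ∫ s in t..(T + K), w s * z s = ∫ s in t..(T + K), W s * z s :=
    integral_congr fun s hs => by simp only [hWw (hsub htTK le_rfl hs)]
  rw [hlhs, hrhs]
  refine intervalIntegral_mul_comp_add_le_of_monotone htT htTK hL hδmeas
    (fun s hs => hδnn s ⟨ht0.trans hs.1.le, hs.2⟩)
    (fun m hm hm0 hmb => hshift m hm0
      (IntegrableOn.of_nonneg_of_bddAbove measure_Icc_lt_top hm.aestronglyMeasurable hm0 hmb)
      t ⟨ht0, htT⟩)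
    hWmono hW0 hz hznn ?_
  exact (intervalIntegrable_iff_integrableOn_Icc_of_le htTK).2 <|
    (hwz.congr_fun (fun s hs => by rw [hWw hs]) measurableSet_Icc).mono_set
      (Icc_subset_Icc_left ht0)

/-- Shift lemma with a nondecreasing weight: if the time-advance function `δ` satisfies
`s + δ(s) ≤ T + K` on `[0,T]` and `∫_t^T m(s+δ(s)) ds ≤ L ∫_t^{T+K} m(s) ds` for every
nonnegative integrable `m`, then for every nondecreasing nonnegative weight `w` and every
nonnegative measurable `z` with `w·z` integrable on `[0,T+K]`,
`∫_t^T w(s) z(s+δ(s)) ds ≤ L ∫_t^{T+K} w(s) z(s) ds` for all `t ∈ [0,T]`. -/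
theorem shift_ineq_monotone_weight
    (T K L : ℝ) (hT : 0 < T) (hK : 0 ≤ K) (hL : 0 ≤ L)
    (δ : ℝ → ℝ) (hδmeas : Measurable δ)
    (hδnn : ∀ s ∈ Set.Icc (0 : ℝ) T, 0 ≤ δ s)
    (hδle : ∀ s ∈ Set.Icc (0 : ℝ) T, s + δ s ≤ T + K)
    (hshift : ∀ m : ℝ → ℝ, (∀ s, 0 ≤ m s) → IntegrableOn m (Set.Icc 0 (T + K)) →
        ∀ t ∈ Set.Icc (0 : ℝ) T,
          (∫ s in t..T, m (s + δ s)) ≤ L * ∫ s in t..(T + K), m s)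
    (w : ℝ → ℝ) (hw : MonotoneOn w (Set.Icc 0 (T + K)))
    (hwnn : ∀ s ∈ Set.Icc (0 : ℝ) (T + K), 0 ≤ w s)
    (z : ℝ → ℝ) (hz : Measurable z) (hznn : ∀ s, 0 ≤ z s)
    (hwz : IntegrableOn (fun s => w s * z s) (Set.Icc 0 (T + K))) :
    ∀ t ∈ Set.Icc (0 : ℝ) T,
      (∫ s in t..T, w s * z (s + δ s)) ≤ L * ∫ s in t..(T + K), w s * z s :=
  shift_ineq_monotone_weight_general T K L hK hL δ hδmeas hδnn hshift w hw hwnn z hz hznn hwz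
end

section
/- Let H ∈ (1/2,1), T > 0, K ≥ 0, L ≥ 0, β ≥ 0, and let δ, ζ : [0,T] → [0,∞) be measurable with s + δ(s) ≤ T+K and s + ζ(s) ≤ T+K for all s ∈ [0,T], and such that for every nonnegative integrable m on [0,T+K] and every t ∈ [0,T]: ∫_t^T m(s+δ(s)) ds ≤ L ∫_t^{T+K} m(s) ds and ∫_t^T m(s+ζ(s)) ds ≤ L ∫_t^{T+K} m(s) ds. Let a, b : [0,T+K] → [0,∞) be measurable with ∫_0^{T+K} e^{βs}(a(s) + s^{2H−1} b(s)) ds < ∞. Then for every t ∈ [0,T]: (∫_t^T [e^{βs}(a(s+δ(s)) + b(s+ζ(s)))]^{1/2} ds)² ≤ (2(T−t) + (T^{2−2H} − t^{2−2H})/(1−H)) · L · ∫_t^{T+K} e^{βs}(a(s) + s^{2H−1} b(s)) ds. -/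
/-!
Put `m₁(y) = e^{βy} a(y)` and `m₂(y) = e^{βy} y^{2H-1} b(y)`. Because `β ≥ 0`, `2H - 1 ≥ 0` and
the advances are nonnegative, the integrand is bounded on `(t, T]` by
`√m₁(s + δ(s)) + s^{1/2-H} √m₂(s + ζ(s))`. Cauchy–Schwarz on each summand, `(x+y)² ≤ 2x² + 2y²`,
`∫_t^T s^{1-2H} ds = (T^{2-2H} - t^{2-2H})/(2-2H)` and the shift inequalities give the bound.

The shift inequalities only bound integrals, which are `0` for non-integrable functions; applied to
the bounded truncations `min m n` they show, by monotone convergence, that `m ∘ (id + δ)` is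
integrable in the first place.
-/

open MeasureTheory intervalIntegral Real Filter

theorem sqrt_add_le_add_sqrt {x y : ℝ} (hx : 0 ≤ x) (hy : 0 ≤ y) : √(x + y) ≤ √x + √y := by
  rw [sqrt_le_iff]
  refine ⟨by positivity, ?_⟩
  nlinarith [sq_sqrt hx, sq_sqrt hy, sqrt_nonneg x, sqrt_nonneg y]

theorem sqrt_exp_mul_add_le {β r s x y A B : ℝ} (hβ : 0 ≤ β) (hr : 0 ≤ r) (hs : 0 < s)
    (hsx : s ≤ x) (hsy : s ≤ y) (hA : 0 ≤ A) (hB : 0 ≤ B) :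
    √(exp (β * s) * (A + B))
      ≤ √(exp (β * x) * A) + √(s ^ (-r)) * √(exp (β * y) * |y| ^ r * B) := by
  have hx : exp (β * s) ≤ exp (β * x) := exp_le_exp.2 (by nlinarith)
  have hy : exp (β * s) ≤ s ^ (-r) * (exp (β * y) * |y| ^ r) :=
    calc exp (β * s) = s ^ (-r) * (exp (β * s) * s ^ r) := by
          rw [rpow_neg hs.le]; field_simp
      _ ≤ s ^ (-r) * (exp (β * y) * |y| ^ r) := by
          gcongr
          exact hsy.trans (le_abs_self y)
  rw [← sqrt_mul (by positivity)]
  calc √(exp (β * s) * (A + B))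
      ≤ √(exp (β * x) * A + s ^ (-r) * (exp (β * y) * |y| ^ r * B)) :=
        sqrt_le_sqrt (by nlinarith [mul_le_mul_of_nonneg_right hy hB,
          mul_le_mul_of_nonneg_right hx hA])
    _ ≤ _ := sqrt_add_le_add_sqrt (by positivity) (by positivity)

section

variable {α : Type*} [MeasurableSpace α] {μ : Measure α}

theorem integrable_of_forall_integral_min_le [IsFiniteMeasure μ] {f : α → ℝ}
    (hf : AEStronglyMeasurable f μ) (hf0 : 0 ≤ᵐ[μ] f) {C : ℝ}
    (hC : ∀ n : ℕ, ∫ x, min (f x) n ∂μ ≤ C) : Integrable f μ := by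
  have htrunc (n : ℕ) : Integrable (fun x => min (f x) n) μ := by
    refine (integrable_const (n : ℝ)).mono' (hf.inf aestronglyMeasurable_const) ?_
    filter_upwards [hf0] with x hx
    rw [Real.norm_of_nonneg (le_min hx n.cast_nonneg)]
    exact min_le_right _ _
  have hlim : Tendsto (fun n : ℕ => ∫⁻ x, ENNReal.ofReal (min (f x) n) ∂μ) atTop
      (nhds (∫⁻ x, ENNReal.ofReal (f x) ∂μ)) := by
    refine lintegral_tendsto_of_tendsto_of_monotone
      (fun n => (htrunc n).aemeasurable.ennreal_ofReal)
      (ae_of_all _ fun x m n hmn => ENNReal.ofReal_le_ofReal (min_le_min_left _ (by simpa)))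
      (ae_of_all _ fun x => tendsto_const_nhds.congr' ?_)
    filter_upwards [eventually_ge_atTop ⌈f x⌉₊] with n hn
    rw [min_eq_left ((Nat.le_ceil _).trans (by exact_mod_cast hn))]
  have hbound (n : ℕ) : ∫⁻ x, ENNReal.ofReal (min (f x) n) ∂μ ≤ ENNReal.ofReal C := by
    rw [← ofReal_integral_eq_lintegral_ofReal (htrunc n)
      (by filter_upwards [hf0] with x hx using le_min hx n.cast_nonneg)]
    exact ENNReal.ofReal_le_ofReal (hC n)
  refine ⟨hf, (hasFiniteIntegral_iff_ofReal hf0).2 ?_⟩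
  exact (le_of_tendsto' hlim hbound).trans_lt ENNReal.ofReal_lt_top

theorem memLp_two_sqrt {f : α → ℝ} (hf : Integrable f μ) (hf0 : 0 ≤ᵐ[μ] f) :
    MemLp (fun x => √(f x)) 2 μ := by
  refine (memLp_two_iff_integrable_sq (continuous_sqrt.comp_aestronglyMeasurable hf.1)).2 ?_
  refine hf.congr ?_
  filter_upwards [hf0] with x hx using (sq_sqrt hx).symm

theorem integrable_sqrt_mul_sqrt {f g : α → ℝ} (hf : Integrable f μ) (hg : Integrable g μ)
    (hf0 : 0 ≤ᵐ[μ] f) (hg0 : 0 ≤ᵐ[μ] g) : Integrable (fun x => √(f x) * √(g x)) μ :=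
  (memLp_two_sqrt hf hf0).integrable_mul (memLp_two_sqrt hg hg0)

theorem sq_integral_sqrt_mul_sqrt_le {f g : α → ℝ} (hf : Integrable f μ) (hg : Integrable g μ)
    (hf0 : 0 ≤ᵐ[μ] f) (hg0 : 0 ≤ᵐ[μ] g) :
    (∫ x, √(f x) * √(g x) ∂μ) ^ 2 ≤ (∫ x, f x ∂μ) * ∫ x, g x ∂μ := by
  have h2 : ENNReal.ofReal 2 = 2 := by norm_num
  have holder := integral_mul_le_Lp_mul_Lq_of_nonneg Real.HolderConjugate.two_two
    (ae_of_all μ fun x => sqrt_nonneg (f x)) (ae_of_all μ fun x => sqrt_nonneg (g x))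
    (h2 ▸ memLp_two_sqrt hf hf0) (h2 ▸ memLp_two_sqrt hg hg0)
  have hsq {h : α → ℝ} (hh0 : 0 ≤ᵐ[μ] h) : ∫ x, √(h x) ^ (2 : ℝ) ∂μ = ∫ x, h x ∂μ :=
    integral_congr_ae (by filter_upwards [hh0] with x hx using by rw [rpow_two, sq_sqrt hx])
  rw [hsq hf0, hsq hg0, ← sqrt_eq_rpow, ← sqrt_eq_rpow,
    ← sqrt_mul (integral_nonneg_of_ae hf0)] at holder
  calc (∫ x, √(f x) * √(g x) ∂μ) ^ 2 ≤ √((∫ x, f x ∂μ) * ∫ x, g x ∂μ) ^ 2 :=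
        pow_le_pow_left₀ (MeasureTheory.integral_nonneg fun x => by positivity) holder 2
    _ = _ := sq_sqrt (mul_nonneg (integral_nonneg_of_ae hf0) (integral_nonneg_of_ae hg0))

theorem sq_integral_le_of_le_sqrt_add_sqrt_mul_sqrt [IsFiniteMeasure μ] {F f₁ w f₂ : α → ℝ}
    (hF : AEStronglyMeasurable F μ) (hF0 : 0 ≤ᵐ[μ] F)
    (hf₁ : Integrable f₁ μ) (hf₁0 : 0 ≤ᵐ[μ] f₁) (hw : Integrable w μ) (hw0 : 0 ≤ᵐ[μ] w)
    (hf₂ : Integrable f₂ μ) (hf₂0 : 0 ≤ᵐ[μ] f₂)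
    (hle : ∀ᵐ x ∂μ, F x ≤ √(f₁ x) + √(w x) * √(f₂ x)) :
    (∫ x, F x ∂μ) ^ 2
      ≤ 2 * ((μ.real Set.univ + ∫ x, w x ∂μ) * ((∫ x, f₁ x ∂μ) + ∫ x, f₂ x ∂μ)) := by
  have h1 : Integrable (fun _ => (1 : ℝ)) μ := integrable_const 1
  have h10 : 0 ≤ᵐ[μ] fun _ => (1 : ℝ) := ae_of_all μ fun _ => zero_le_one
  have hX := sq_integral_sqrt_mul_sqrt_le h1 hf₁ h10 hf₁0
  have hY := sq_integral_sqrt_mul_sqrt_le hw hf₂ hw0 hf₂0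
  have iX := integrable_sqrt_mul_sqrt h1 hf₁ h10 hf₁0
  have iY := integrable_sqrt_mul_sqrt hw hf₂ hw0 hf₂0
  simp only [sqrt_one, one_mul, MeasureTheory.integral_const, smul_eq_mul, mul_one] at hX iX
  have hFint : Integrable F μ := (iX.add iY).mono' hF <| by
    filter_upwards [hF0, hle] with x hx0 hx
    rwa [Real.norm_of_nonneg hx0]
  have hmono : ∫ x, F x ∂μ ≤ (∫ x, √(f₁ x) ∂μ) + ∫ x, √(w x) * √(f₂ x) ∂μ := by
    rw [← integral_add iX iY]
    exact integral_mono_ae hFint (iX.add iY) hle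
  have hI₁ := integral_nonneg_of_ae hf₁0
  have hI₂ := integral_nonneg_of_ae hf₂0
  have hW := integral_nonneg_of_ae hw0
  calc (∫ x, F x ∂μ) ^ 2
      ≤ ((∫ x, √(f₁ x) ∂μ) + ∫ x, √(w x) * √(f₂ x) ∂μ) ^ 2 :=
        pow_le_pow_left₀ (integral_nonneg_of_ae hF0) hmono 2
    _ ≤ 2 * ((∫ x, √(f₁ x) ∂μ) ^ 2 + (∫ x, √(w x) * √(f₂ x) ∂μ) ^ 2) := add_sq_le
    _ ≤ _ := by nlinarith [mul_nonneg (measureReal_nonneg (μ := μ) (s := Set.univ)) hI₂,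
      mul_nonneg hW hI₁]

end

theorem integrableOn_comp_of_forall_integral_comp_le {g : ℝ → ℝ} (hg : Measurable g)
    {S : Set ℝ} {t T c L : ℝ} (htT : t ≤ T) (htc : t ≤ c) (hS : Set.Icc t c ⊆ S) (hL : 0 ≤ L)
    (hshift : ∀ m : ℝ → ℝ, (∀ s, 0 ≤ m s) → IntegrableOn m S →
      ∫ s in t..T, m (g s) ≤ L * ∫ s in t..c, m s)
    {m : ℝ → ℝ} (hm : Measurable m) (hm0 : ∀ s, 0 ≤ m s) (hmS : IntegrableOn m S) :
    IntegrableOn (fun s => m (g s)) (Set.Ioc t T) := by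
  have hSc {m' : ℝ → ℝ} (hm' : IntegrableOn m' S) : IntervalIntegrable m' volume t c :=
    (hm'.mono_set (by rwa [Set.uIcc_of_le htc])).intervalIntegrable
  refine integrable_of_forall_integral_min_le (hm.comp hg).aestronglyMeasurable
    (ae_of_all _ fun s => hm0 _) (C := L * ∫ s in t..c, m s) fun n => ?_
  have hmn0 (s : ℝ) : 0 ≤ min (m s) n := le_min (hm0 s) n.cast_nonneg
  have hmnS : IntegrableOn (fun s => min (m s) n) S :=
    hmS.mono' (hm.min measurable_const).aestronglyMeasurable
      (ae_of_all _ fun s => by rw [Real.norm_of_nonneg (hmn0 s)]; exact min_le_left _ _)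
  calc ∫ s in Set.Ioc t T, min (m (g s)) n
      = ∫ s in t..T, min (m (g s)) n := (integral_of_le htT).symm
    _ ≤ L * ∫ s in t..c, min (m s) n := hshift _ hmn0 hmnS
    _ ≤ L * ∫ s in t..c, m s := by
      gcongr
      exact integral_mono_on htc (hSc hmnS) (hSc hmS) fun s _ => min_le_left _ _

theorem sq_intervalIntegral_le_of_shift_bound {F w g₁ g₂ m₁ m₂ : ℝ → ℝ}
    {S : Set ℝ} {t T c L : ℝ} (htT : t ≤ T) (htc : t ≤ c) (hS : Set.Icc t c ⊆ S) (hL : 0 ≤ L)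
    (hg₁ : Measurable g₁) (hg₂ : Measurable g₂)
    (hshift₁ : ∀ m : ℝ → ℝ, (∀ s, 0 ≤ m s) → IntegrableOn m S →
      ∫ s in t..T, m (g₁ s) ≤ L * ∫ s in t..c, m s)
    (hshift₂ : ∀ m : ℝ → ℝ, (∀ s, 0 ≤ m s) → IntegrableOn m S →
      ∫ s in t..T, m (g₂ s) ≤ L * ∫ s in t..c, m s)
    (hm₁ : Measurable m₁) (hm₁0 : ∀ s, 0 ≤ m₁ s) (hm₁S : IntegrableOn m₁ S)
    (hm₂ : Measurable m₂) (hm₂0 : ∀ s, 0 ≤ m₂ s) (hm₂S : IntegrableOn m₂ S)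
    (hw : IntervalIntegrable w volume t T) (hw0 : ∀ s ∈ Set.Ioc t T, 0 ≤ w s)
    (hF : Measurable F) (hF0 : ∀ s, 0 ≤ F s)
    (hle : ∀ s ∈ Set.Ioc t T, F s ≤ √(m₁ (g₁ s)) + √(w s) * √(m₂ (g₂ s))) :
    (∫ s in t..T, F s) ^ 2
      ≤ 2 * ((T - t) + ∫ s in t..T, w s) * L * ∫ s in t..c, m₁ s + m₂ s := by
  have hSc {m : ℝ → ℝ} (hm : IntegrableOn m S) : IntervalIntegrable m volume t c :=
    (hm.mono_set (by rwa [Set.uIcc_of_le htc])).intervalIntegrable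
  have key := sq_integral_le_of_le_sqrt_add_sqrt_mul_sqrt (μ := volume.restrict (Set.Ioc t T))
    hF.aestronglyMeasurable (ae_of_all _ hF0)
    (integrableOn_comp_of_forall_integral_comp_le hg₁ htT htc hS hL hshift₁ hm₁ hm₁0 hm₁S)
    (ae_of_all _ fun s => hm₁0 _)
    ((intervalIntegrable_iff_integrableOn_Ioc_of_le htT).1 hw)
    (ae_restrict_of_forall_mem measurableSet_Ioc hw0)
    (integrableOn_comp_of_forall_integral_comp_le hg₂ htT htc hS hL hshift₂ hm₂ hm₂0 hm₂S)
    (ae_of_all _ fun s => hm₂0 _) (ae_restrict_of_forall_mem measurableSet_Ioc hle)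
  have hJ₁ := hshift₁ m₁ hm₁0 hm₁S
  have hJ₂ := hshift₂ m₂ hm₂0 hm₂S
  rw [integral_of_le htT] at hJ₁ hJ₂
  rw [measureReal_restrict_apply_univ, Real.volume_real_Ioc_of_le htT] at key
  have hW : 0 ≤ ∫ s in Set.Ioc t T, w s := setIntegral_nonneg measurableSet_Ioc hw0
  rw [integral_of_le htT, integral_of_le htT, integral_add (hSc hm₁S) (hSc hm₂S)]
  calc _ ≤ _ := key
    _ ≤ 2 * ((T - t + ∫ s in Set.Ioc t T, w s) *
          (L * (∫ s in t..c, m₁ s) + L * ∫ s in t..c, m₂ s)) := by gcongr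
    _ = _ := by ring

theorem anticipated_term_estimate_general
    (H T K L β : ℝ) (hH : 1 / 2 < H) (hH1 : H < 1) (hK : 0 ≤ K)
    (hL : 0 ≤ L) (hβ : 0 ≤ β)
    (δ ζ : ℝ → ℝ) (hδmeas : Measurable δ) (hζmeas : Measurable ζ)
    (hδnn : ∀ s ∈ Set.Icc (0 : ℝ) T, 0 ≤ δ s)
    (hζnn : ∀ s ∈ Set.Icc (0 : ℝ) T, 0 ≤ ζ s)
    (hshiftδ : ∀ m : ℝ → ℝ, (∀ s, 0 ≤ m s) → IntegrableOn m (Set.Icc 0 (T + K)) →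
        ∀ t ∈ Set.Icc (0 : ℝ) T,
          (∫ s in t..T, m (s + δ s)) ≤ L * ∫ s in t..(T + K), m s)
    (hshiftζ : ∀ m : ℝ → ℝ, (∀ s, 0 ≤ m s) → IntegrableOn m (Set.Icc 0 (T + K)) →
        ∀ t ∈ Set.Icc (0 : ℝ) T,
          (∫ s in t..T, m (s + ζ s)) ≤ L * ∫ s in t..(T + K), m s)
    (a b : ℝ → ℝ) (ha : Measurable a) (hb : Measurable b)
    (hann : ∀ s, 0 ≤ a s) (hbnn : ∀ s, 0 ≤ b s)
    (hint : IntegrableOn (fun s => Real.exp (β * s) * (a s + s ^ (2 * H - 1) * b s))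
      (Set.Icc 0 (T + K))) :
    ∀ t ∈ Set.Icc (0 : ℝ) T,
      (∫ s in t..T, Real.sqrt (Real.exp (β * s) * (a (s + δ s) + b (s + ζ s)))) ^ 2
        ≤ (2 * (T - t) + (T ^ (2 - 2 * H) - t ^ (2 - 2 * H)) / (1 - H)) * L *
            ∫ s in t..(T + K), Real.exp (β * s) * (a s + s ^ (2 * H - 1) * b s) := by
  rintro t ht
  have htc : t ≤ T + K := by linarith [ht.2]
  -- `|y|`, not `y`: the shift hypotheses need `m₂ ≥ 0` on all of `ℝ`, and `rpow` can be negative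
  -- at a negative base
  set m₁ : ℝ → ℝ := fun y => exp (β * y) * a y
  set m₂ : ℝ → ℝ := fun y => exp (β * y) * |y| ^ (2 * H - 1) * b y
  have hm₁0 (y : ℝ) : 0 ≤ m₁ y := by have := hann y; positivity
  have hm₂0 (y : ℝ) : 0 ≤ m₂ y := by have := hbnn y; positivity
  have hsplit : Set.EqOn (fun s => exp (β * s) * (a s + s ^ (2 * H - 1) * b s))
      (fun s => m₁ s + m₂ s) (Set.Ici 0) := fun s hs => by
    simp only [m₁, m₂, abs_of_nonneg (Set.mem_Ici.1 hs)]
    ring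
  obtain ⟨hm₁S, hm₂S⟩ := (integrable_add_iff_of_nonneg (by fun_prop) (ae_of_all _ hm₁0)
    (ae_of_all _ hm₂0)).1 (hint.congr_fun (hsplit.mono Set.Icc_subset_Ici_self) measurableSet_Icc)
  have hle (s : ℝ) (hs : s ∈ Set.Ioc t T) : √(exp (β * s) * (a (s + δ s) + b (s + ζ s)))
      ≤ √(m₁ (s + δ s)) + √(s ^ (-(2 * H - 1))) * √(m₂ (s + ζ s)) :=
    have hs0 : 0 < s := ht.1.trans_lt hs.1
    sqrt_exp_mul_add_le hβ (by linarith) hs0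
      (le_add_of_nonneg_right (hδnn s ⟨hs0.le, hs.2⟩))
      (le_add_of_nonneg_right (hζnn s ⟨hs0.le, hs.2⟩)) (hann _) (hbnn _)
  have key := sq_intervalIntegral_le_of_shift_bound ht.2 htc (Set.Icc_subset_Icc_left ht.1) hL
    (measurable_id.add hδmeas) (measurable_id.add hζmeas)
    (fun m hm0 hmS => hshiftδ m hm0 hmS t ht) (fun m hm0 hmS => hshiftζ m hm0 hmS t ht)
    (by fun_prop) hm₁0 hm₁S (by fun_prop) hm₂0 hm₂S (intervalIntegrable_rpow' (by linarith))
    (fun s hs => rpow_nonneg (ht.1.trans hs.1.le) _) (by fun_prop) (fun s => sqrt_nonneg _) hle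
  rw [integral_rpow (Or.inl (by linarith)), show -(2 * H - 1) + 1 = 2 - 2 * H by ring] at key
  rw [integral_congr (hsplit.mono fun s hs => (le_min ht.1 (ht.1.trans htc)).trans hs.1)]
  convert key using 3
  field_simp

/-- Deterministic anticipated-term estimate: for `H ∈ (1/2,1)`, advances `δ, ζ`
satisfying the standing shift conditions with constant `L`, and nonnegative `a, b`
with `∫_0^{T+K} e^{βs}(a(s) + s^{2H−1} b(s)) ds < ∞`, for all `t ∈ [0,T]`:
`(∫_t^T [e^{βs}(a(s+δ(s)) + b(s+ζ(s)))]^{1/2} ds)²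
  ≤ (2(T−t) + (T^{2−2H} − t^{2−2H})/(1−H)) L ∫_t^{T+K} e^{βs}(a(s) + s^{2H−1} b(s)) ds`. -/
theorem anticipated_term_estimate
    (H T K L β : ℝ) (hH : 1 / 2 < H) (hH1 : H < 1) (hT : 0 < T) (hK : 0 ≤ K)
    (hL : 0 ≤ L) (hβ : 0 ≤ β)
    (δ ζ : ℝ → ℝ) (hδmeas : Measurable δ) (hζmeas : Measurable ζ)
    (hδnn : ∀ s ∈ Set.Icc (0 : ℝ) T, 0 ≤ δ s)
    (hζnn : ∀ s ∈ Set.Icc (0 : ℝ) T, 0 ≤ ζ s)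
    (hδle : ∀ s ∈ Set.Icc (0 : ℝ) T, s + δ s ≤ T + K)
    (hζle : ∀ s ∈ Set.Icc (0 : ℝ) T, s + ζ s ≤ T + K)
    (hshiftδ : ∀ m : ℝ → ℝ, (∀ s, 0 ≤ m s) → IntegrableOn m (Set.Icc 0 (T + K)) →
        ∀ t ∈ Set.Icc (0 : ℝ) T,
          (∫ s in t..T, m (s + δ s)) ≤ L * ∫ s in t..(T + K), m s)
    (hshiftζ : ∀ m : ℝ → ℝ, (∀ s, 0 ≤ m s) → IntegrableOn m (Set.Icc 0 (T + K)) →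
        ∀ t ∈ Set.Icc (0 : ℝ) T,
          (∫ s in t..T, m (s + ζ s)) ≤ L * ∫ s in t..(T + K), m s)
    (a b : ℝ → ℝ) (ha : Measurable a) (hb : Measurable b)
    (hann : ∀ s, 0 ≤ a s) (hbnn : ∀ s, 0 ≤ b s)
    (hint : IntegrableOn (fun s => Real.exp (β * s) * (a s + s ^ (2 * H - 1) * b s))
      (Set.Icc 0 (T + K))) :
    ∀ t ∈ Set.Icc (0 : ℝ) T,
      (∫ s in t..T, Real.sqrt (Real.exp (β * s) * (a (s + δ s) + b (s + ζ s)))) ^ 2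
        ≤ (2 * (T - t) + (T ^ (2 - 2 * H) - t ^ (2 - 2 * H)) / (1 - H)) * L *
            ∫ s in t..(T + K), Real.exp (β * s) * (a s + s ^ (2 * H - 1) * b s) :=
  anticipated_term_estimate_general H T K L β hH hH1 hK hL hβ δ ζ hδmeas hζmeas hδnn hζnn hshiftδ
    hshiftζ a b ha hb hann hbnn hint
end

section
/- Let T > 0, C ≥ 0, let x : [0,T] → [0,∞) be continuous and let g : [0,T] → [0,∞) be integrable. If x(t)² ≤ 4C ∫_t^T x(s) g(s) ds for all t ∈ [0,T], then x(t) ≤ 2C ∫_t^T g(s) ds for all t ∈ [0,T]. -/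
/-!
Put `G t = ∫_t^T g`. Because `-G` is an absolutely continuous primitive of `g`,
`∫_t^T G g = G(t)² / 2`. Hence an affine bound `x ≤ A + 2C G` on `[0,T]` feeds back into the
hypothesis as `x(t)² ≤ 4CA G(t) + 4C² G(t)² ≤ (A' + 2C G(t))²` whenever
`4C G(0) (A - A') ≤ A'²`, and such an `A' < A` exists as long as `A > 0`. So the least admissible
`A` is `0`.
-/

open MeasureTheory intervalIntegral Set

theorem intervalIntegral.integral_integral_mul_self {g : ℝ → ℝ} {a b : ℝ}
    (hg : IntervalIntegrable g volume a b) :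
    ∫ s in a..b, (∫ r in s..b, g r) * g s = (∫ s in a..b, g s) ^ 2 / 2 := by
  set F : ℝ → ℝ := fun x => ∫ v in b..x, g v
  have hF : AbsolutelyContinuousOnInterval F a b :=
    hg.absolutelyContinuousOnInterval_intervalIntegral right_mem_uIcc
  have hF_eq (x : ℝ) : F x = -∫ r in x..b, g r := integral_symm x b
  have hderiv : ∀ᵐ x, x ∈ uIoc a b →
      deriv F x * F x + F x * deriv F x = -(2 * ((∫ r in x..b, g r) * g x)) := by
    filter_upwards [hg.ae_hasDerivAt_integral] with x hx hxab
    rw [(hx (uIoc_subset_uIcc hxab) b right_mem_uIcc).deriv, hF_eq]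
    ring
  have := hF.integral_deriv_mul_eq_sub hF
  rw [integral_congr_ae hderiv, integral_neg, intervalIntegral.integral_const_mul, hF_eq, hF_eq,
    integral_same] at this
  linarith

theorem le_zero_of_forall_upperBound_improves {α : Type*} {f : α → ℝ} {s : Set α}
    (hbdd : BddAbove (f '' s))
    (himp : ∀ A > 0, (∀ y ∈ s, f y ≤ A) → ∃ A' < A, ∀ y ∈ s, f y ≤ A') :
    ∀ y ∈ s, f y ≤ 0 := by
  by_contra! ⟨y, hy, hpos⟩
  set A := sSup (f '' s)
  have hle : ∀ z ∈ s, f z ≤ A := fun z hz => le_csSup hbdd (mem_image_of_mem f hz)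
  obtain ⟨A', hA'A, hA'⟩ := himp A (hpos.trans_le (hle y hy)) hle
  have : A ≤ A' := csSup_le (image_nonempty.mpr ⟨y, hy⟩) (forall_mem_image.mpr hA')
  linarith

theorem exists_lt_mul_sub_le_sq {K A : ℝ} (hK : 0 ≤ K) (hA : 0 < A) :
    ∃ A' < A, 0 ≤ A' ∧ K * (A - A') ≤ A' ^ 2 := by
  have hden : 0 < K + 2 * A := by linarith
  refine ⟨A * (K + A) / (K + 2 * A), ?_, by positivity, ?_⟩
  · rw [div_lt_iff₀ hden]
    nlinarith
  -- `K (A - A') ≤ A'²` reduces to `K (K + 2A) ≤ (K + A)²`.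
  · rw [div_pow, le_div_iff₀ (by positivity)]
    field_simp
    nlinarith [sq_nonneg A, mul_pos hA hA]

theorem le_add_mul_integral_of_le_add_mul_integral {T C : ℝ} {x g : ℝ → ℝ} (hC : 0 ≤ C)
    (hx : ContinuousOn x (Icc 0 T)) (hg : IntegrableOn g (Icc 0 T))
    (hgnn : ∀ t ∈ Icc (0 : ℝ) T, 0 ≤ g t)
    (h : ∀ t ∈ Icc (0 : ℝ) T, x t ^ 2 ≤ 4 * C * ∫ s in t..T, x s * g s)
    {A A' : ℝ} (hA' : 0 ≤ A') (hA'A : A' ≤ A)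
    (hK : 4 * C * (∫ s in (0 : ℝ)..T, g s) * (A - A') ≤ A' ^ 2)
    (hA : ∀ s ∈ Icc (0 : ℝ) T, x s ≤ A + 2 * C * ∫ r in s..T, g r) :
    ∀ t ∈ Icc (0 : ℝ) T, x t ≤ A' + 2 * C * ∫ r in t..T, g r := by
  intro t ht
  have hsub {a : ℝ} (ha : a ∈ Icc 0 T) : uIcc a T ⊆ Icc 0 T := by
    rw [uIcc_of_le ha.2]
    exact Icc_subset_Icc_left ha.1
  have hgi : IntervalIntegrable g volume t T := (hg.mono_set (hsub ht)).intervalIntegrable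
  have hGgi : IntervalIntegrable (fun s => (∫ r in s..T, g r) * g s) volume t T :=
    hgi.continuousOn_mul (continuousOn_primitive_interval_left (hg.mono_set (hsub ht)))
  set G := ∫ r in t..T, g r
  have hG_nonneg : 0 ≤ G :=
    integral_nonneg ht.2 fun s hs => hgnn s (hsub ht (Icc_subset_uIcc hs))
  have hG_le : G ≤ ∫ s in (0 : ℝ)..T, g s :=
    integral_mono_interval ht.1 ht.2 le_rfl
      ((ae_restrict_iff' measurableSet_Ioc).mpr
        (.of_forall fun s hs => hgnn s (Ioc_subset_Icc_self hs)))
      (hg.mono_set (hsub ⟨le_rfl, ht.1.trans ht.2⟩)).intervalIntegrable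
  have hint : ∫ s in t..T, x s * g s ≤ A * G + C * G ^ 2 := calc
    ∫ s in t..T, x s * g s ≤ ∫ s in t..T, (A + 2 * C * ∫ r in s..T, g r) * g s := by
      refine integral_mono_on ht.2 (hgi.continuousOn_mul (hx.mono (hsub ht)))
        (by simpa only [add_mul, mul_assoc] using (hgi.const_mul A).add (hGgi.const_mul (2 * C)))
        fun s hs => ?_
      have hs' := hsub ht (Icc_subset_uIcc hs)
      exact mul_le_mul_of_nonneg_right (hA s hs') (hgnn s hs')
    _ = ∫ s in t..T, A * g s + 2 * C * ((∫ r in s..T, g r) * g s) := by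
      simp only [add_mul, mul_assoc]
    _ = A * G + C * G ^ 2 := by
      rw [integral_add (hgi.const_mul A) (hGgi.const_mul (2 * C)),
        intervalIntegral.integral_const_mul, intervalIntegral.integral_const_mul,
        integral_integral_mul_self hgi]
      ring
  have hshrink : 4 * C * G * (A - A') ≤ A' ^ 2 := le_trans (by gcongr) hK
  refine le_of_abs_le (abs_le_of_sq_le_sq ?_ (by positivity))
  nlinarith [h t ht, mul_le_mul_of_nonneg_left hint (by positivity : (0 : ℝ) ≤ 4 * C)]

theorem backward_sqrt_gronwall_general
    (T C : ℝ) (hC : 0 ≤ C)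
    (x g : ℝ → ℝ)
    (hx : ContinuousOn x (Set.Icc 0 T))
    (hg : IntegrableOn g (Set.Icc 0 T))
    (hgnn : ∀ t ∈ Set.Icc (0 : ℝ) T, 0 ≤ g t)
    (h : ∀ t ∈ Set.Icc (0 : ℝ) T, x t ^ 2 ≤ 4 * C * ∫ s in t..T, x s * g s) :
    ∀ t ∈ Set.Icc (0 : ℝ) T, x t ≤ 2 * C * ∫ s in t..T, g s := by
  intro t ht
  have hG_nonneg (r : ℝ) (hr : r ∈ Icc 0 T) : 0 ≤ ∫ s in r..T, g s :=
    integral_nonneg hr.2 fun s hs => hgnn s ⟨hr.1.trans hs.1, hs.2⟩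
  have hbdd : BddAbove ((fun t => x t - 2 * C * ∫ s in t..T, g s) '' Icc 0 T) := by
    obtain ⟨M, hM⟩ := isCompact_Icc.bddAbove_image hx
    refine ⟨M, forall_mem_image.mpr fun s hs => ?_⟩
    nlinarith [hM (mem_image_of_mem x hs), hG_nonneg s hs]
  have hK : 0 ≤ 4 * C * ∫ s in (0 : ℝ)..T, g s := by
    have := hG_nonneg 0 ⟨le_rfl, ht.1.trans ht.2⟩
    positivity
  have hx_le := le_zero_of_forall_upperBound_improves hbdd fun A hA hbound => by
    obtain ⟨A', hA'A, hA', hshrink⟩ := exists_lt_mul_sub_le_sq hK hA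
    refine ⟨A', hA'A, fun s hs => sub_le_iff_le_add.mpr ?_⟩
    exact le_add_mul_integral_of_le_add_mul_integral hC hx hg hgnn h hA' hA'A.le hshrink
      (fun r hr => sub_le_iff_le_add.mp (hbound r hr)) s hs
  linarith [hx_le t ht]

/-- Backward square-root Gronwall lemma (Lemma 20 of Maticiuc–Nie): if
`x(t)² ≤ 4C ∫_t^T x(s) g(s) ds` on `[0,T]` for a nonnegative continuous `x` and a
nonnegative integrable `g`, then `x(t) ≤ 2C ∫_t^T g(s) ds` on `[0,T]`. -/
theorem backward_sqrt_gronwall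
    (T C : ℝ) (hT : 0 < T) (hC : 0 ≤ C)
    (x g : ℝ → ℝ)
    (hx : ContinuousOn x (Set.Icc 0 T))
    (hxnn : ∀ t ∈ Set.Icc (0 : ℝ) T, 0 ≤ x t)
    (hg : IntegrableOn g (Set.Icc 0 T))
    (hgnn : ∀ t ∈ Set.Icc (0 : ℝ) T, 0 ≤ g t)
    (h : ∀ t ∈ Set.Icc (0 : ℝ) T, x t ^ 2 ≤ 4 * C * ∫ s in t..T, x s * g s) :
    ∀ t ∈ Set.Icc (0 : ℝ) T, x t ≤ 2 * C * ∫ s in t..T, g s :=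
  backward_sqrt_gronwall_general T C hC x g hx hg hgnn h
end

section
/- Let H ∈ (1/2,1), n ∈ ℕ, and t₁, …, tₙ ≥ 0. Then the n×n real symmetric matrix R with entries R_{ij} = (1/2)(tᵢ^{2H} + tⱼ^{2H} − |tᵢ − tⱼ|^{2H}) is positive semidefinite, i.e., Σ_{i,j} λᵢ λⱼ R_{ij} ≥ 0 for all λ ∈ ℝⁿ. -/
/-!
For `0 < α < 2` the substitution `x ↦ x / |a|` gives the Lévy–Khintchine representation
`|a| ^ α = c⁻¹ * ∫ x in Ioi 0, (1 - cos (a * x)) * x ^ (-(1 + α))` with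
`c = ∫ x in Ioi 0, (1 - cos x) * x ^ (-(1 + α)) > 0`. Hence, with `α = 2H`, the covariance
`R(s, t)` is a mixture over `x > 0` of the kernels `(g s + g t - g (s - t)) / 2`,
`g = 1 - cos (· * x)`, and each of these is positive semidefinite because
`(1 - cos u) + (1 - cos v) - (1 - cos (u - v)) = (1 - cos u) * (1 - cos v) + sin u * sin v`.
-/

open MeasureTheory Set Real

section LevyIntegral

variable {α : ℝ}

lemma continuousOn_one_sub_cos_mul_rpow (a : ℝ) :
    ContinuousOn (fun x => (1 - cos (a * x)) * x ^ (-(1 + α))) (Ioi 0) :=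
  (continuous_const.sub (continuous_cos.comp (continuous_const_mul a))).continuousOn.mul
    (continuousOn_id.rpow_const fun _ hx => Or.inl (mem_Ioi.1 hx).ne')

lemma one_sub_cos_mem_Icc (y : ℝ) : 1 - cos y ∈ Icc 0 (min (y ^ 2 / 2) 2) := by
  have := one_sub_sq_div_two_le_cos (x := y)
  have := cos_le_one y
  have := neg_one_le_cos y
  exact ⟨by linarith, le_min (by linarith) (by linarith)⟩

lemma integrableOn_Ioc_one_sub_cos_mul_rpow (hα : α < 2) (a : ℝ) {b : ℝ} (hb : 0 ≤ b) :
    IntegrableOn (fun x => (1 - cos (a * x)) * x ^ (-(1 + α))) (Ioc 0 b) := by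
  have hdom : IntegrableOn (fun x : ℝ => a ^ 2 / 2 * x ^ (1 - α)) (Ioc 0 b) :=
    ((intervalIntegrable_iff_integrableOn_Ioc_of_le hb).1
      (intervalIntegral.intervalIntegrable_rpow' (by linarith))).const_mul _
  refine hdom.mono' ((continuousOn_one_sub_cos_mul_rpow a).aestronglyMeasurable
    measurableSet_Ioi |>.mono_set Ioc_subset_Ioi_self) ?_
  refine (ae_restrict_iff' measurableSet_Ioc).2 (ae_of_all _ fun x ⟨hx0, _⟩ => ?_)
  obtain ⟨hcos0, hcos⟩ := one_sub_cos_mem_Icc (a * x)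
  have hsplit : x ^ (1 - α) = x ^ 2 * x ^ (-(1 + α)) := by
    rw [← rpow_natCast, ← rpow_add hx0]; norm_num; ring_nf
  rw [norm_of_nonneg (mul_nonneg hcos0 (rpow_nonneg hx0.le _)), hsplit, ← mul_assoc]
  gcongr
  calc 1 - cos (a * x) ≤ (a * x) ^ 2 / 2 := (le_min_iff.1 hcos).1
    _ = a ^ 2 / 2 * x ^ 2 := by ring

lemma integrableOn_Ioi_one_sub_cos_mul_rpow (hα : 0 < α) (a : ℝ) {b : ℝ} (hb : 0 < b) :
    IntegrableOn (fun x => (1 - cos (a * x)) * x ^ (-(1 + α))) (Ioi b) := by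
  have hdom : IntegrableOn (fun x : ℝ => 2 * x ^ (-(1 + α))) (Ioi b) :=
    (integrableOn_Ioi_rpow_of_lt (by linarith) hb).const_mul 2
  refine hdom.mono' ((continuousOn_one_sub_cos_mul_rpow a).aestronglyMeasurable
    measurableSet_Ioi |>.mono_set (Ioi_subset_Ioi hb.le)) ?_
  refine (ae_restrict_iff' measurableSet_Ioi).2 (ae_of_all _ fun x hx => ?_)
  have hx0 : 0 < x := hb.trans hx
  obtain ⟨hcos0, hcos⟩ := one_sub_cos_mem_Icc (a * x)
  rw [norm_of_nonneg (mul_nonneg hcos0 (rpow_nonneg hx0.le _))]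
  gcongr
  exact (le_min_iff.1 hcos).2

lemma integrableOn_one_sub_cos_mul_rpow (hα0 : 0 < α) (hα2 : α < 2) (a : ℝ) :
    IntegrableOn (fun x => (1 - cos (a * x)) * x ^ (-(1 + α))) (Ioi 0) := by
  rw [← Ioc_union_Ioi_eq_Ioi zero_le_one]
  exact (integrableOn_Ioc_one_sub_cos_mul_rpow hα2 a zero_le_one).union
    (integrableOn_Ioi_one_sub_cos_mul_rpow hα0 a one_pos)

lemma integral_one_sub_cos_mul_rpow (hα : α ≠ 0) (a : ℝ) :
    ∫ x in Ioi 0, (1 - cos (a * x)) * x ^ (-(1 + α))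
      = |a| ^ α * ∫ x in Ioi 0, (1 - cos x) * x ^ (-(1 + α)) := by
  rcases (abs_nonneg a).eq_or_lt with ha | ha
  · simp [abs_eq_zero.1 ha.symm, zero_rpow hα]
  have hscale : ∀ x ∈ Ioi (0 : ℝ), (1 - cos (a * x)) * x ^ (-(1 + α))
      = |a| ^ (1 + α) * ((1 - cos (|a| * x)) * (|a| * x) ^ (-(1 + α))) := fun x hx => by
    rw [← cos_abs (a * x), abs_mul, abs_of_pos (mem_Ioi.1 hx), mul_rpow ha.le (mem_Ioi.1 hx).le,
      rpow_neg ha.le]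
    field_simp
  rw [setIntegral_congr_fun measurableSet_Ioi hscale, integral_const_mul,
    integral_comp_mul_left_Ioi (fun y => (1 - cos y) * y ^ (-(1 + α))) 0 ha, mul_zero,
    smul_eq_mul, ← mul_assoc, ← rpow_neg_one, ← rpow_add ha]
  ring_nf

lemma integral_one_sub_cos_mul_rpow_pos (hα0 : 0 < α) (hα2 : α < 2) :
    0 < ∫ x in Ioi 0, (1 - cos x) * x ^ (-(1 + α)) := by
  have hint := integrableOn_one_sub_cos_mul_rpow hα0 hα2 1
  simp only [one_mul] at hint
  have hnonneg : 0 ≤ᵐ[volume.restrict (Ioi 0)] fun x => (1 - cos x) * x ^ (-(1 + α)) :=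
    (ae_restrict_iff' measurableSet_Ioi).2 (ae_of_all _ fun x hx =>
      mul_nonneg (one_sub_cos_mem_Icc x).1 (rpow_nonneg (mem_Ioi.1 hx).le _))
  rw [setIntegral_pos_iff_support_of_nonneg_ae hnonneg hint]
  have hsub : Ioo 0 (2 * π) ⊆ Function.support (fun x => (1 - cos x) * x ^ (-(1 + α))) ∩ Ioi 0 :=
    fun x ⟨hx0, hx2π⟩ => by
      refine ⟨mul_ne_zero ?_ (rpow_pos_of_pos hx0 _).ne', hx0⟩
      rw [sub_ne_zero, ne_comm, Ne, cos_eq_one_iff_of_lt_of_lt (by linarith [pi_pos]) hx2π]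
      exact hx0.ne'
  calc (0 : ENNReal) < volume (Ioo 0 (2 * π)) := by simp [pi_pos]
    _ ≤ _ := measure_mono hsub

lemma abs_rpow_eq_integral_div (hα0 : 0 < α) (hα2 : α < 2) (a : ℝ) :
    |a| ^ α = (∫ x in Ioi 0, (1 - cos (a * x)) * x ^ (-(1 + α)))
      / ∫ x in Ioi 0, (1 - cos x) * x ^ (-(1 + α)) := by
  rw [integral_one_sub_cos_mul_rpow hα0.ne',
    mul_div_cancel_right₀ _ (integral_one_sub_cos_mul_rpow_pos hα0 hα2).ne']

lemma rpow_add_rpow_sub_abs_sub_rpow_eq_integral_div (hα0 : 0 < α) (hα2 : α < 2) {a b : ℝ}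
    (ha : 0 ≤ a) (hb : 0 ≤ b) :
    a ^ α + b ^ α - |a - b| ^ α
      = (∫ x in Ioi 0, (1 - cos (a * x)) * x ^ (-(1 + α)) + (1 - cos (b * x)) * x ^ (-(1 + α))
          - (1 - cos ((a - b) * x)) * x ^ (-(1 + α)))
        / ∫ x in Ioi 0, (1 - cos x) * x ^ (-(1 + α)) := by
  have h := integrableOn_one_sub_cos_mul_rpow hα0 hα2
  have hpow {c : ℝ} (hc : 0 ≤ c) : c ^ α = |c| ^ α := by rw [abs_of_nonneg hc]
  have hab : IntegrableOn (fun x => (1 - cos (a * x)) * x ^ (-(1 + α))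
      + (1 - cos (b * x)) * x ^ (-(1 + α))) (Ioi 0) := (h a).add (h b)
  rw [integral_sub hab (h (a - b)), integral_add (h a) (h b), hpow ha, hpow hb,
    abs_rpow_eq_integral_div hα0 hα2, abs_rpow_eq_integral_div hα0 hα2,
    abs_rpow_eq_integral_div hα0 hα2, sub_div, add_div]

end LevyIntegral

lemma one_sub_cos_add_one_sub_cos_sub_one_sub_cos_sub (a b : ℝ) :
    (1 - cos a) + (1 - cos b) - (1 - cos (a - b)) = (1 - cos a) * (1 - cos b) + sin a * sin b := by
  rw [cos_sub]; ring

lemma sum_sum_mul_one_sub_cos_nonneg {ι : Type*} [Fintype ι] (s l : ι → ℝ) :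
    0 ≤ ∑ i, ∑ j, l i * l j * ((1 - cos (s i)) + (1 - cos (s j)) - (1 - cos (s i - s j))) := by
  have hsq : ∑ i, ∑ j, l i * l j * ((1 - cos (s i)) + (1 - cos (s j)) - (1 - cos (s i - s j)))
      = (∑ i, l i * (1 - cos (s i))) ^ 2 + (∑ i, l i * sin (s i)) ^ 2 := by
    simp only [sq, Finset.sum_mul_sum, ← Finset.sum_add_distrib,
      one_sub_cos_add_one_sub_cos_sub_one_sub_cos_sub]
    refine Finset.sum_congr rfl fun i _ => Finset.sum_congr rfl fun j _ => by ring
  rw [hsq]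
  positivity

lemma sum_sum_mul_integral_nonneg {X ι : Type*} [MeasurableSpace X] [Fintype ι] {μ : Measure X}
    {K : ι → ι → X → ℝ} (hK : ∀ i j, Integrable (K i j) μ) (l : ι → ℝ)
    (hpsd : ∀ᵐ x ∂μ, 0 ≤ ∑ i, ∑ j, l i * l j * K i j x) :
    0 ≤ ∑ i, ∑ j, l i * l j * ∫ x, K i j x ∂μ := by
  have hint : ∀ i j, Integrable (fun x => l i * l j * K i j x) μ :=
    fun i j => (hK i j).const_mul _
  simp_rw [← integral_const_mul, ← integral_finsetSum _ fun i _ => hint _ i]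
  rw [← integral_finsetSum _ fun i _ => integrable_finsetSum _ fun j _ => hint i j]
  exact integral_nonneg_of_ae hpsd

/-- Positive semidefiniteness of the fractional Brownian motion covariance:
for `H ∈ (1/2,1)` and `t₁,…,tₙ ≥ 0`, the matrix
`R_{ij} = (1/2)(tᵢ^{2H} + tⱼ^{2H} − |tᵢ − tⱼ|^{2H})` is positive semidefinite. -/
theorem fbm_covariance_posSemidef
    (H : ℝ) (hH : 1 / 2 < H) (hH1 : H < 1)
    (n : ℕ) (t : Fin n → ℝ) (ht : ∀ i, 0 ≤ t i) (l : Fin n → ℝ) :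
    0 ≤ ∑ i, ∑ j,
      l i * l j *
        ((1 / 2) * (t i ^ (2 * H) + t j ^ (2 * H) - |t i - t j| ^ (2 * H))) := by
  have hα0 : 0 < 2 * H := by linarith
  have hα2 : 2 * H < 2 := by linarith
  set c := ∫ x in Ioi 0, (1 - cos x) * x ^ (-(1 + 2 * H)) with hc_def
  have hc : 0 < c := integral_one_sub_cos_mul_rpow_pos hα0 hα2
  set K : Fin n → Fin n → ℝ → ℝ := fun i j x => (1 - cos (t i * x)) * x ^ (-(1 + 2 * H))
    + (1 - cos (t j * x)) * x ^ (-(1 + 2 * H)) - (1 - cos ((t i - t j) * x)) * x ^ (-(1 + 2 * H))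
  have hK (i j : Fin n) : IntegrableOn (K i j) (Ioi 0) :=
    have h := integrableOn_one_sub_cos_mul_rpow hα0 hα2
    ((h _).add (h _)).sub (h _)
  have hentry (i j : Fin n) : (1 / 2) * (t i ^ (2 * H) + t j ^ (2 * H) - |t i - t j| ^ (2 * H))
      = (2 * c)⁻¹ * ∫ x in Ioi 0, K i j x := by
    rw [rpow_add_rpow_sub_abs_sub_rpow_eq_integral_div hα0 hα2 (ht i) (ht j), ← hc_def]
    ring
  simp_rw [hentry, mul_left_comm _ (2 * c)⁻¹, ← Finset.mul_sum]
  refine mul_nonneg (by positivity) (sum_sum_mul_integral_nonneg hK l ?_)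
  refine (ae_restrict_iff' measurableSet_Ioi).2 (ae_of_all _ fun x hx => ?_)
  simp only [K, ← add_mul, ← sub_mul, ← mul_assoc, ← Finset.sum_mul]
  refine mul_nonneg ?_ (rpow_nonneg (mem_Ioi.1 hx).le _)
  simpa only [sub_mul] using sum_sum_mul_one_sub_cos_nonneg (t · * x) l
end
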